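/- arXiv:2305.06766 — 2 statements merged into one kernel-verified Lean document; each statement's English description precedes it below -/
import Mathlib

section
/- Let (Ω, ℙ) be a probability space, χ ∈ [1,2], and let (Z_n)_{n∈ℕ} be real random variables on Ω. Suppose there are nonnegative reals K_{n,m} such that for all n, m and all t ∈ ℝ the characteristic function of Z_n − Z_m equals exp(−K_{n,m}|t|^χ), and K_{n,m} → 0 as n, m → ∞. Then there exists a real random variable Z on Ω such that Z_n converges to Z in probability. -/
open MeasureTheory ProbabilityTheory Filter Topology

/-- The characteristic function of a real random variable `Z` on `(Ω, P)`:
`φ_Z(t) = E[exp(i t Z)]`. -/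
noncomputable def charFn {Ω : Type*} [MeasurableSpace Ω] (P : Measure Ω) (Z : Ω → ℝ) (t : ℝ) : ℂ :=
  ∫ ω, Complex.exp (t * Z ω * Complex.I) ∂P

/-!
The truncation inequality `μ {|x| > r} ≤ (r / 2) ‖∫_{-2/r}^{2/r} (1 - φ_μ t) dt‖` turns the
characteristic function `exp (-K n m |t| ^ χ)` of `Z n - Z m` into the tail bound
`P (|Z n - Z m| > r) ≤ 2 K n m (2 / r) ^ χ`, so `(Z n)` is Cauchy in probability.
A sequence that is Cauchy in probability has a subsequence whose consecutive differences exceed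
`2⁻ᵏ` with probability at most `2⁻ᵏ`; by Borel–Cantelli this subsequence converges almost
surely, hence in probability, and the Cauchy property passes the convergence on to the whole
sequence.
-/

open scoped ENNReal

namespace MeasureTheory

variable {α E : Type*} [MeasurableSpace α] [PseudoMetricSpace E]

def CauchyInMeasure (μ : Measure α) (f : ℕ → α → E) : Prop :=
  ∀ ε > 0, Tendsto (fun p : ℕ × ℕ => μ {x | ε ≤ dist (f p.1 x) (f p.2 x)}) atTop (𝓝 0)

variable {μ : Measure α} {f : ℕ → α → E}

lemma CauchyInMeasure.exists_strictMono_measure_dist_succ_le (hf : CauchyInMeasure μ f) :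
    ∃ φ : ℕ → ℕ, StrictMono φ ∧
      ∀ k, μ {x | (2⁻¹ : ℝ) ^ k ≤ dist (f (φ k) x) (f (φ (k + 1)) x)} ≤ 2⁻¹ ^ k := by
  have h_eventually (k : ℕ) : ∀ᶠ n in atTop,
      ∀ m ≥ n, μ {x | (2⁻¹ : ℝ) ^ k ≤ dist (f n x) (f m x)} ≤ 2⁻¹ ^ k := by
    have hk := (hf ((2⁻¹ : ℝ) ^ k) (by positivity)).eventually
      (eventually_le_nhds (b := (2⁻¹ : ℝ≥0∞) ^ k)
        (ENNReal.pow_pos (ENNReal.inv_pos.2 ENNReal.ofNat_ne_top) k))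
    obtain ⟨N, hN⟩ := eventually_atTop_prod_self'.mp hk
    exact eventually_atTop.mpr ⟨N, fun n hn m hm => hN n hn m (hn.trans hm)⟩
  obtain ⟨φ, hφ, hφk⟩ := extraction_forall_of_eventually h_eventually
  exact ⟨φ, hφ, fun k => hφk k _ (hφ (Nat.lt_succ_self k)).le⟩

lemma CauchyInMeasure.tendstoInMeasure_of_subseq (hf : CauchyInMeasure μ f) {φ : ℕ → ℕ}
    (hφ : StrictMono φ) {g : α → E} (hg : TendstoInMeasure μ (fun k => f (φ k)) atTop g) :
    TendstoInMeasure μ f atTop g := by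
  rw [tendstoInMeasure_iff_dist] at hg ⊢
  intro ε hε
  have h_pair : Tendsto (fun n => (n, φ n)) atTop atTop := by
    rw [← prod_atTop_atTop_eq]
    exact tendsto_id.prodMk hφ.tendsto_atTop
  have h_sum := ((hf (ε / 2) (by positivity)).comp h_pair).add (hg (ε / 2) (by positivity))
  rw [add_zero] at h_sum
  refine tendsto_of_tendsto_of_tendsto_of_le_of_le tendsto_const_nhds h_sum (fun _ => zero_le)
    fun n => (measure_mono fun x hx => ?_).trans (measure_union_le _ _)
  by_contra h
  simp only [Set.mem_union, Set.mem_ofPred_eq, not_or, not_le] at hx h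
  linarith [dist_triangle (f n x) (f (φ n) x) (g x)]

lemma ae_cauchySeq_of_measure_dist_succ_le {g : ℕ → α → E}
    (hg : ∀ k, μ {x | (2⁻¹ : ℝ) ^ k ≤ dist (g k x) (g (k + 1) x)} ≤ 2⁻¹ ^ k) :
    ∀ᵐ x ∂μ, CauchySeq fun k => g k x := by
  have h_tsum : ∑' k, μ {x | (2⁻¹ : ℝ) ^ k ≤ dist (g k x) (g (k + 1) x)} ≠ ∞ := by
    refine ne_top_of_le_ne_top ?_ (ENNReal.tsum_le_tsum hg)
    simp [ENNReal.tsum_geometric, ENNReal.one_sub_inv_two]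
  filter_upwards [ae_eventually_notMem h_tsum] with x hx
  refine cauchySeq_of_dist_le_of_summable _ (fun k => le_rfl)
    (Summable.of_norm_bounded_eventually summable_geometric_two ?_)
  rw [Nat.cofinite_eq_atTop]
  filter_upwards [hx] with k hk
  simp only [not_le] at hk
  simpa [abs_of_nonneg dist_nonneg] using hk.le

theorem CauchyInMeasure.exists_tendstoInMeasure [CompleteSpace E] [IsFiniteMeasure μ]
    (hf : CauchyInMeasure μ f) (hmeas : ∀ n, AEStronglyMeasurable (f n) μ) :
    ∃ g, StronglyMeasurable g ∧ TendstoInMeasure μ f atTop g := by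
  obtain ⟨φ, hφ, hφ_dist⟩ := hf.exists_strictMono_measure_dist_succ_le
  have h_ae_cauchy := ae_cauchySeq_of_measure_dist_succ_le hφ_dist
  obtain ⟨g, hg, h_lim⟩ := exists_stronglyMeasurable_limit_of_tendsto_ae (fun k => hmeas (φ k))
    (h_ae_cauchy.mono fun _ hx => cauchySeq_tendsto_of_complete hx)
  exact ⟨g, hg, hf.tendstoInMeasure_of_subseq hφ
    (tendstoInMeasure_of_tendsto_ae (fun k => hmeas (φ k)) h_lim)⟩

end MeasureTheory

lemma charFn_eq_charFun_map {Ω : Type*} [MeasurableSpace Ω] {P : Measure Ω} {X : Ω → ℝ}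
    (hX : AEMeasurable X P) (t : ℝ) : charFn P X t = charFun (P.map X) t := by
  rw [charFun_apply_real, integral_map hX (by fun_prop)]
  rfl

lemma norm_one_sub_exp_neg_le {a : ℝ} (ha : 0 ≤ a) : ‖(1 : ℂ) - (Real.exp (-a) : ℂ)‖ ≤ a := by
  rw [← Complex.ofReal_one, ← Complex.ofReal_sub, Complex.norm_real, Real.norm_eq_abs,
    abs_of_nonneg (by simpa using ha)]
  linarith [Real.one_sub_le_exp_neg a]

lemma measureReal_abs_gt_le_of_norm_one_sub_charFun_le {μ : Measure ℝ} [IsProbabilityMeasure μ]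
    {k χ r : ℝ} (hk : 0 ≤ k) (hχ : 0 ≤ χ) (hr : 0 < r)
    (h : ∀ t, ‖1 - charFun μ t‖ ≤ k * |t| ^ χ) :
    μ.real {x | r < |x|} ≤ 2 * k * (2 / r) ^ χ := by
  have h_bound : ∀ t ∈ Set.uIoc (-2 * r⁻¹) (2 * r⁻¹), ‖1 - charFun μ t‖ ≤ k * (2 / r) ^ χ := by
    intro t ht
    rw [Set.uIoc_of_le (by linarith [inv_pos.2 hr])] at ht
    have ht_abs : |t| ≤ 2 / r := by
      rw [div_eq_mul_inv]
      exact abs_le.2 ⟨by linarith [ht.1], ht.2⟩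
    exact (h t).trans (by gcongr)
  calc μ.real {x | r < |x|}
      ≤ 2⁻¹ * r * ‖∫ t in (-2 * r⁻¹)..(2 * r⁻¹), 1 - charFun μ t‖ :=
        measureReal_abs_gt_le_integral_charFun hr
    _ ≤ 2⁻¹ * r * (k * (2 / r) ^ χ * |2 * r⁻¹ - -2 * r⁻¹|) := by
        gcongr
        exact intervalIntegral.norm_integral_le_of_norm_le_const h_bound
    _ = 2 * k * (2 / r) ^ χ := by
        rw [abs_of_pos (by linarith [inv_pos.2 hr])]
        field_simp
        ring

lemma measure_abs_gt_le_of_charFn_eq {Ω : Type*} [MeasurableSpace Ω] {P : Measure Ω}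
    [IsProbabilityMeasure P] {X : Ω → ℝ} (hX : Measurable X) {k χ r : ℝ} (hk : 0 ≤ k)
    (hχ : 0 ≤ χ) (hr : 0 < r) (hX_char : ∀ t, charFn P X t = (Real.exp (-(k * |t| ^ χ)) : ℂ)) :
    P {ω | r < |X ω|} ≤ ENNReal.ofReal (2 * k * (2 / r) ^ χ) := by
  have := Measure.isProbabilityMeasure_map (μ := P) hX.aemeasurable
  have h := measureReal_abs_gt_le_of_norm_one_sub_charFun_le (μ := P.map X) hk hχ hr fun t => by
    rw [← charFn_eq_charFun_map hX.aemeasurable, hX_char]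
    exact norm_one_sub_exp_neg_le (by positivity)
  rw [map_measureReal_apply hX (measurableSet_lt measurable_const measurable_abs)] at h
  rw [← ofReal_measureReal]
  exact ENNReal.ofReal_le_ofReal h

lemma cauchyInMeasure_of_charFn_sub_eq {Ω : Type*} [MeasurableSpace Ω] {P : Measure Ω}
    [IsProbabilityMeasure P] {χ : ℝ} (hχ : 0 ≤ χ) {Z : ℕ → Ω → ℝ} (hZ : ∀ n, Measurable (Z n))
    {K : ℕ → ℕ → ℝ} (hK : ∀ n m, 0 ≤ K n m)
    (hchar : ∀ n m t, charFn P (fun ω => Z n ω - Z m ω) t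
      = (Real.exp (-(K n m * |t| ^ χ)) : ℂ))
    (hKlim : Tendsto (fun p : ℕ × ℕ => K p.1 p.2) atTop (𝓝 0)) :
    CauchyInMeasure P Z := by
  intro ε hε
  have h_bound : Tendsto (fun p : ℕ × ℕ => ENNReal.ofReal (2 * K p.1 p.2 * (2 / (ε / 2)) ^ χ))
      atTop (𝓝 0) := by
    simpa using ENNReal.tendsto_ofReal ((hKlim.const_mul 2).mul_const ((2 / (ε / 2)) ^ χ))
  refine tendsto_of_tendsto_of_tendsto_of_le_of_le tendsto_const_nhds h_bound (fun _ => zero_le)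
    fun p => (measure_mono fun ω hω => ?_).trans (measure_abs_gt_le_of_charFn_eq
      ((hZ p.1).sub (hZ p.2)) (hK _ _) hχ (half_pos hε) (hchar _ _))
  simp only [Set.mem_ofPred_eq, Real.dist_eq, Pi.sub_apply] at hω ⊢
  linarith

/-- If the differences `Z n - Z m` have symmetric `χ`-stable characteristic functions
`exp(-K n m * |t|^χ)` with `K n m → 0` as `n, m → ∞`, then `Z n` converges in probability
to some random variable `Zlim`. -/
theorem statement0
    {Ω : Type*} [MeasurableSpace Ω] (P : Measure Ω) [IsProbabilityMeasure P]
    (χ : ℝ) (hχ : χ ∈ Set.Icc (1 : ℝ) 2)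
    (Z : ℕ → Ω → ℝ) (hZ : ∀ n, Measurable (Z n))
    (K : ℕ → ℕ → ℝ) (hK : ∀ n m, 0 ≤ K n m)
    (hchar : ∀ n m t, charFn P (fun ω => Z n ω - Z m ω) t
      = (Real.exp (-(K n m * |t| ^ χ)) : ℂ))
    (hKlim : Tendsto (fun p : ℕ × ℕ => K p.1 p.2) atTop (𝓝 0)) :
    ∃ Zlim : Ω → ℝ, Measurable Zlim ∧
      ∀ ε > (0 : ℝ), Tendsto (fun n => P {ω | ε < |Z n ω - Zlim ω|}) atTop (𝓝 0) := by
  have h_cauchy : CauchyInMeasure P Z :=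
    cauchyInMeasure_of_charFn_sub_eq (zero_le_one.trans hχ.1) hZ hK hchar hKlim
  obtain ⟨Zlim, hZlim, h_conv⟩ :=
    h_cauchy.exists_tendstoInMeasure fun n => (hZ n).aestronglyMeasurable
  refine ⟨Zlim, hZlim.measurable, fun ε hε => ?_⟩
  refine tendsto_of_tendsto_of_tendsto_of_le_of_le tendsto_const_nhds
    (tendstoInMeasure_iff_dist.mp h_conv ε hε) (fun _ => zero_le) fun n => measure_mono ?_
  intro ω hω
  simp only [Set.mem_ofPred_eq, Real.dist_eq] at hω ⊢
  exact hω.le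
end

section
/- Let χ ∈ (0,2] and let (X_n), (Y_n), X, Y be real random variables on a probability space (Ω, ℙ) such that X_n → X in probability, Y_n → Y in probability, and for each n the characteristic function of X_n − Y_n equals t ↦ exp(−K_n|t|^χ) with nonnegative reals K_n → 0. Then X = Y ℙ-almost surely. -/
/-!
Convergence in probability passes to differences, so `Xₙ - Yₙ → X - Y` in probability, hence in
distribution, and the characteristic functions converge pointwise:
`φ_{X-Y}(t) = lim exp(-Kₙ|t|^χ) = 1`. This is the characteristic function of the Dirac mass at `0`,
so by uniqueness of characteristic functions `X - Y = 0` almost surely.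
-/

open MeasureTheory ProbabilityTheory Filter Topology

namespace MeasureTheory

variable {Ω ι : Type*} [MeasurableSpace Ω] {P : Measure Ω} {l : Filter ι}

lemma charFn_eq_charFun_map {Z : Ω → ℝ} (hZ : AEMeasurable Z P) (t : ℝ) :
    charFn P Z t = charFun (P.map Z) t := by
  rw [charFun_apply_real, integral_map hZ (by fun_prop), charFn]

lemma tendstoInMeasure_of_tendsto_measure_lt_abs {f : ι → Ω → ℝ} {g : Ω → ℝ}
    (h : ∀ ε > (0 : ℝ), Tendsto (fun i => P {ω | ε < |f i ω - g ω|}) l (𝓝 0)) :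
    TendstoInMeasure P f l g := by
  refine tendstoInMeasure_iff_norm.2 fun ε hε => ?_
  refine tendsto_of_tendsto_of_tendsto_of_le_of_le tendsto_const_nhds (h (ε / 2) (by positivity))
    (fun _ => zero_le) fun i => measure_mono fun ω hω => ?_
  simp only [Set.mem_ofPred_eq, Real.norm_eq_abs] at hω ⊢
  linarith

lemma TendstoInMeasure.sub {E : Type*} [SeminormedAddCommGroup E] {f g : ι → Ω → E}
    {F G : Ω → E} (hf : TendstoInMeasure P f l F) (hg : TendstoInMeasure P g l G) :
    TendstoInMeasure P (f - g) l (F - G) := by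
  rw [tendstoInMeasure_iff_norm] at *
  intro ε hε
  have hsum := (hf (ε / 2) (by positivity)).add (hg (ε / 2) (by positivity))
  rw [add_zero] at hsum
  refine tendsto_of_tendsto_of_tendsto_of_le_of_le tendsto_const_nhds hsum (fun _ => zero_le)
    fun i => (measure_mono fun ω hω => ?_).trans (measure_union_le _ _)
  simp only [Set.mem_ofPred_eq, Set.mem_union, Pi.sub_apply] at hω ⊢
  by_contra! hlt
  have htri : ‖f i ω - g i ω - (F ω - G ω)‖ ≤ ‖f i ω - F ω‖ + ‖g i ω - G ω‖ := by
    rw [sub_sub_sub_comm]; exact norm_sub_le _ _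
  linarith

lemma TendstoInMeasure.tendsto_charFn [IsProbabilityMeasure P] {Z : ℕ → Ω → ℝ} {Z₀ : Ω → ℝ}
    (h : TendstoInMeasure P Z atTop Z₀) (hZ : ∀ n, AEMeasurable (Z n) P) (t : ℝ) :
    Tendsto (fun n => charFn P (Z n) t) atTop (𝓝 (charFn P Z₀ t)) := by
  have hdist := h.tendstoInDistribution hZ
  simp_rw [charFn_eq_charFun_map (hZ _), charFn_eq_charFun_map hdist.aemeasurable_limit]
  exact ProbabilityMeasure.tendsto_iff_tendsto_charFun.1 hdist.tendsto t

lemma ae_eq_zero_of_charFn_eq_one [IsProbabilityMeasure P] {Z : Ω → ℝ} (hZ : AEMeasurable Z P)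
    (h : ∀ t, charFn P Z t = 1) : Z =ᵐ[P] 0 := by
  have hmap : P.map Z = Measure.dirac 0 :=
    Measure.ext_of_charFun <| funext fun t => by simp [← charFn_eq_charFun_map hZ, h t]
  refine ae_of_ae_map (p := (· = 0)) hZ ?_
  rw [hmap, ae_dirac_eq]
  exact eventually_pure.2 rfl

end MeasureTheory

theorem statement12_general
    {Ω : Type*} [MeasurableSpace Ω] (P : Measure Ω) [IsProbabilityMeasure P]
    (χ : ℝ)
    (Xs Ys : ℕ → Ω → ℝ) (hXs : ∀ n, Measurable (Xs n)) (hYs : ∀ n, Measurable (Ys n))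
    (X Y : Ω → ℝ)
    (hXprob : ∀ ε > (0 : ℝ), Tendsto (fun n => P {ω | ε < |Xs n ω - X ω|}) atTop (𝓝 0))
    (hYprob : ∀ ε > (0 : ℝ), Tendsto (fun n => P {ω | ε < |Ys n ω - Y ω|}) atTop (𝓝 0))
    (K : ℕ → ℝ)
    (hchar : ∀ n t, charFn P (fun ω => Xs n ω - Ys n ω) t
      = (Real.exp (-(K n * |t| ^ χ)) : ℂ))
    (hKlim : Tendsto K atTop (𝓝 0)) :
    X =ᵐ[P] Y := by
  have hdiff : TendstoInMeasure P (Xs - Ys) atTop (X - Y) :=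
    (tendstoInMeasure_of_tendsto_measure_lt_abs hXprob).sub
      (tendstoInMeasure_of_tendsto_measure_lt_abs hYprob)
  have hmeas : ∀ n, AEMeasurable ((Xs - Ys) n) P := fun n => ((hXs n).sub (hYs n)).aemeasurable
  have hone : ∀ t, charFn P (X - Y) t = 1 := fun t => by
    refine tendsto_nhds_unique (hdiff.tendsto_charFn hmeas t) ?_
    change Tendsto (fun n => charFn P (fun ω => Xs n ω - Ys n ω) t) atTop _
    have hexp : Tendsto (fun n => -(K n * |t| ^ χ)) atTop (𝓝 0) := by
      simpa using (hKlim.mul_const (|t| ^ χ)).neg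
    simpa only [hchar, Function.comp_def, Real.exp_zero, Complex.ofReal_one] using
      ((Complex.continuous_ofReal.comp Real.continuous_exp).tendsto 0).comp hexp
  filter_upwards [ae_eq_zero_of_charFn_eq_one (hdiff.aemeasurable hmeas) hone] with ω hω
  exact sub_eq_zero.1 hω

/-- Uniqueness assertion in the proof of the paper's Theorem 3.1: if `X_n → X` and `Y_n → Y`
in probability and `X_n - Y_n` has characteristic function `exp(-K_n|t|^χ)` with `K_n → 0`,
then `X = Y` almost surely. -/
theorem statement12
    {Ω : Type*} [MeasurableSpace Ω] (P : Measure Ω) [IsProbabilityMeasure P]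
    (χ : ℝ) (hχ : χ ∈ Set.Ioc (0 : ℝ) 2)
    (Xs Ys : ℕ → Ω → ℝ) (hXs : ∀ n, Measurable (Xs n)) (hYs : ∀ n, Measurable (Ys n))
    (X Y : Ω → ℝ) (hX : Measurable X) (hY : Measurable Y)
    (hXprob : ∀ ε > (0 : ℝ), Tendsto (fun n => P {ω | ε < |Xs n ω - X ω|}) atTop (𝓝 0))
    (hYprob : ∀ ε > (0 : ℝ), Tendsto (fun n => P {ω | ε < |Ys n ω - Y ω|}) atTop (𝓝 0))
    (K : ℕ → ℝ) (hK : ∀ n, 0 ≤ K n)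
    (hchar : ∀ n t, charFn P (fun ω => Xs n ω - Ys n ω) t
      = (Real.exp (-(K n * |t| ^ χ)) : ℂ))
    (hKlim : Tendsto K atTop (𝓝 0)) :
    X =ᵐ[P] Y :=
  statement12_general P χ Xs Ys hXs hYs X Y hXprob hYprob K hchar hKlim
end
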